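/- arXiv:1604.05023 — 2 statements merged into one kernel-verified Lean document; each statement's English description precedes it below -/
import Mathlib

section
/- Let G be a port-numbered graph and let ℓ ≥ 0 be an integer. If the augmented truncated views B^ℓ(v) of all nodes v of G are pairwise distinct, then there exists a function f, defined on augmented truncated views at depth ℓ, such that the assignment v ↦ f(B^ℓ(v)) is a leader election output for G; that is, leader election is possible in time ℓ when nodes are given complete knowledge of the graph. -/
namespace Election

/-- A port-numbered graph: a simple undirected connected graph on `n ≥ 3` unlabeled nodes
(vertex set `Fin n`) in which, at each node `v` of degree `d`, the edges incident to `v`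
carry distinct port numbers `0, …, d-1` at `v`. `portNum v u` is the port number at `v`
of the edge `{v, u}` (meaningful only when `v` and `u` are adjacent). -/
structure PortGraph where
  n : ℕ
  three_le : 3 ≤ n
  G : SimpleGraph (Fin n)
  conn : G.Connected
  portNum : Fin n → Fin n → ℕ
  port_lt : ∀ v u : Fin n, G.Adj v u → portNum v u < Nat.card {w : Fin n // G.Adj v w}
  port_inj : ∀ v u w : Fin n, G.Adj v u → G.Adj v w → portNum v u = portNum v w → u = w

namespace PortGraph

/-- The degree of a node. -/
noncomputable def degree (PG : PortGraph) (v : Fin PG.n) : ℕ :=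
  Nat.card {w : Fin PG.n // PG.G.Adj v w}

open Classical in
/-- The neighbor of `v` reached through port `p` (junk value `v` if there is none). -/
noncomputable def nbr (PG : PortGraph) (v : Fin PG.n) (p : ℕ) : Fin PG.n :=
  if h : ∃ u : Fin PG.n, PG.G.Adj v u ∧ PG.portNum v u = p then h.choose else v

/-- Abstract (augmented truncated) views: a view at depth `0` is a leaf carrying a degree;
a view at depth `ℓ+1` is a node whose children are listed in the order of the port numbers
`0, …, d-1` at the root, each child carrying the port number at the other endpoint of the
corresponding edge together with the subview at depth `ℓ`. -/
inductive AugView : Type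
  | leaf (deg : ℕ) : AugView
  | node (children : List (ℕ × AugView)) : AugView

/-- The augmented truncated view `B^ℓ(v)` of node `v` at depth `ℓ`. -/
noncomputable def augView (PG : PortGraph) : ℕ → Fin PG.n → AugView
  | 0, v => AugView.leaf (PG.degree v)
  | (ℓ + 1), v => AugView.node ((List.range (PG.degree v)).map
      fun p => (PG.portNum (PG.nbr v p) v, PG.augView ℓ (PG.nbr v p)))

/-- `IsPath PG v s vs` means: the sequence `s = (p₁, q₁, …, p_k, q_k)` of port numbers codes
a path in `PG` starting at `v` whose i-th edge carries port `p_i` at the endpoint closer to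
`v` and `q_i` at the other endpoint, and `vs` is the list of visited vertices (from `v` on). -/
inductive IsPath (PG : PortGraph) : Fin PG.n → List ℕ → List (Fin PG.n) → Prop
  | nil (v : Fin PG.n) : IsPath PG v [] [v]
  | cons (v u : Fin PG.n) (p q : ℕ) (rest : List ℕ) (vs : List (Fin PG.n))
      (hadj : PG.G.Adj v u) (hp : PG.portNum v u = p) (hq : PG.portNum u v = q)
      (htail : IsPath PG u rest vs) : IsPath PG v (p :: q :: rest) (v :: vs)

/-- `P` is a leader election output for `PG`: every node `v` outputs a sequence of port
numbers coding a simple path starting at `v`, and all these paths end at a common node. -/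
def IsLeaderElection (PG : PortGraph) (P : Fin PG.n → List ℕ) : Prop :=
  ∃ leader : Fin PG.n, ∀ v : Fin PG.n, ∃ vs : List (Fin PG.n),
    PG.IsPath v (P v) vs ∧ vs.Nodup ∧ vs.getLast? = some leader

/-- A graph is feasible if at some depth all augmented truncated views are pairwise distinct. -/
def Feasible (PG : PortGraph) : Prop :=
  ∃ ℓ : ℕ, Function.Injective (PG.augView ℓ)

/-- The election index: the smallest depth at which all augmented truncated views are distinct. -/
noncomputable def electionIndex (PG : PortGraph) : ℕ :=
  sInf {ℓ : ℕ | Function.Injective (PG.augView ℓ)}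

/-- The diameter: the maximum distance between two nodes. -/
noncomputable def diam (PG : PortGraph) : ℕ :=
  sSup (Set.range fun p : Fin PG.n × Fin PG.n => PG.G.dist p.1 p.2)

end PortGraph


lemma walk_to_isPath (PG : PortGraph) {v u : Fin PG.n} (w : PG.G.Walk v u) :
    ∃ s : List ℕ, PG.IsPath v s w.support ∧ w.support.getLast? = some u := by
  induction w with
  | nil => exact ⟨[], PortGraph.IsPath.nil _, rfl⟩
  | @cons a b c hab w ih =>
    obtain ⟨s, hs, hlast⟩ := ih
    refine ⟨PG.portNum a b :: PG.portNum b a :: s,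
      PortGraph.IsPath.cons a b _ _ s w.support hab rfl rfl hs, ?_⟩
    rw [SimpleGraph.Walk.support_cons, ← hlast]
    cases hsup : w.support with
    | nil => exact absurd hsup w.support_ne_nil
    | cons x xs => simp

/-- If the augmented truncated views at depth `ℓ` of all nodes of `G` are pairwise
distinct, then there is a function `f` on augmented truncated views such that
`v ↦ f (B^ℓ(v))` is a leader election output for `G`. -/
theorem election_possible_of_injective_views (PG : PortGraph) (ℓ : ℕ)
    (h : Function.Injective (PG.augView ℓ)) :
    ∃ f : PortGraph.AugView → List ℕ,
      PG.IsLeaderElection (fun v => f (PG.augView ℓ v)) := by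
  classical
  have hn : 0 < PG.n := by have := PG.three_le; omega
  set L : Fin PG.n := ⟨0, hn⟩ with hL
  have hQ : ∀ v : Fin PG.n, ∃ s : List ℕ, ∃ vs : List (Fin PG.n),
      PG.IsPath v s vs ∧ vs.Nodup ∧ vs.getLast? = some L := by
    intro v
    obtain ⟨w⟩ := PG.conn v L
    obtain ⟨s, hs, hlast⟩ := walk_to_isPath PG w.toPath.1
    exact ⟨s, _, hs, w.toPath.2.support_nodup, hlast⟩
  choose P vsf hP hnd hlast using hQ
  refine ⟨fun w => if hw : ∃ v, PG.augView ℓ v = w then P hw.choose else [], L, fun v => ?_⟩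
  have hex : ∃ u, PG.augView ℓ u = PG.augView ℓ v := ⟨v, rfl⟩
  have hch : hex.choose = v := h hex.choose_spec
  simp only [dif_pos hex, hch]
  exact ⟨vsf v, hP v, hnd v, hlast v⟩

end Election
end

section
/- There is a constant C > 0 such that every feasible port-numbered graph with n nodes and diameter D has election index at most C·D·(1 + log(n/D)). -/
/-!
Let `φ` be the election index and `D` the diameter. Below `φ` the partition of the nodes by
views of depth `ℓ` refines strictly at every step (once a step splits no class, no later step
does), so there are at least `ℓ + 1` classes at depth `ℓ ≤ φ`.

If `u` and `v` have equal views at depth `m < φ` but different ones at depth `m + 1`, then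
following from `v` the port numbers of a shortest walk from `u` to any node `x` leads to a node
`x'` whose view agrees with that of `x` up to depth `m - D`; walking back shows that their views
differ at depth `m + D + 1`. So each class at depth `ℓ` contains two classes at depth
`ℓ + 2D + 1`, and classes at depth `D` have at least `2 ^ j` nodes when `φ` exceeds about
`(j + 1)(2D + 1)`. Counting nodes gives `(D + 1) 2 ^ j ≤ n`, whence `φ ≤ 6 D (1 + log (n / D))`.
-/

namespace Election

open Finset

section Partitions

variable {α β γ : Type*} [Fintype α] [DecidableEq β] [DecidableEq γ] {f : α → β} {g : α → γ}

theorem card_image_lt_card_image_of_refines (hfg : ∀ x y, f x = f y → g x = g y) {u v : α}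
    (hg : g u = g v) (hf : f u ≠ f v) : #(univ.image g) < #(univ.image f) := by
  have : Nonempty α := ⟨u⟩
  set τ : β → γ := fun b => g (Function.invFun f b)
  have hτ : ∀ x, τ (f x) = g x := fun x => hfg _ _ (Function.invFun_eq ⟨x, rfl⟩)
  have himage : univ.image g = (univ.image f).image τ := by ext; simp [hτ]
  rw [himage]
  refine card_image_le.lt_of_ne fun h => hf (card_image_iff.1 h (by simp) (by simp) ?_)
  rw [hτ, hτ, hg]

theorem two_mul_le_card_filter_eq_of_refines (hfg : ∀ x y, f x = f y → g x = g y)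
    (hsplit : ∀ x, ∃ x', g x = g x' ∧ f x ≠ f x') {k : ℕ} (hk : ∀ y, k ≤ #{z | f z = f y})
    (x : α) : 2 * k ≤ #{z | g z = g x} := by
  obtain ⟨x', hgx, hfx⟩ := hsplit x
  set A : Finset α := {z | f z = f x}
  set B : Finset α := {z | f z = f x'}
  have hdisj : Disjoint A B := disjoint_filter.2 fun z _ hz hz' => hfx (hz.symm.trans hz')
  calc 2 * k ≤ #A + #B := by linarith [hk x, hk x']
    _ = #(A.disjUnion B hdisj) := (card_disjUnion ..).symm
    _ ≤ #{z | g z = g x} := card_le_card fun z hz => by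
        simp only [mem_disjUnion, A, B, mem_filter, mem_univ, true_and] at hz ⊢
        exact hz.elim (hfg z x) fun h => (hfg z x' h).trans hgx.symm

end Partitions

namespace PortGraph

noncomputable instance : DecidableEq AugView := Classical.decEq _

instance (PG : PortGraph) : NeZero PG.n := ⟨by have := PG.three_le; omega⟩

variable {PG : PortGraph}

theorem nbr_spec {v : Fin PG.n} {p : ℕ} (hp : p < PG.degree v) :
    PG.G.Adj v (PG.nbr v p) ∧ PG.portNum v (PG.nbr v p) = p := by
  have hex : ∃ u, PG.G.Adj v u ∧ PG.portNum v u = p := by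
    let port : {w // PG.G.Adj v w} → Fin (PG.degree v) := fun w => ⟨_, PG.port_lt v w w.2⟩
    have hport : Function.Injective port := fun a b hab =>
      Subtype.ext (PG.port_inj v a b a.2 b.2 (Fin.val_eq_of_eq hab))
    obtain ⟨w, hw⟩ := (hport.bijective_of_nat_card_le (by simp [degree])).2 ⟨p, hp⟩
    exact ⟨w, w.2, congrArg Fin.val hw⟩
  rw [nbr, dif_pos hex]
  exact hex.choose_spec

theorem nbr_portNum {v u : Fin PG.n} (h : PG.G.Adj v u) : PG.nbr v (PG.portNum v u) = u :=
  have hp := nbr_spec (PG.port_lt v u h)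
  PG.port_inj v _ u hp.1 h hp.2

theorem augView_succ_eq_iff {ℓ : ℕ} {u v : Fin PG.n} :
    PG.augView (ℓ + 1) u = PG.augView (ℓ + 1) v ↔ PG.degree u = PG.degree v ∧
      ∀ p < PG.degree u, (PG.portNum (PG.nbr u p) u, PG.augView ℓ (PG.nbr u p)) =
        (PG.portNum (PG.nbr v p) v, PG.augView ℓ (PG.nbr v p)) := by
  simp only [augView, AugView.node.injEq]
  constructor
  · intro h
    have hd : PG.degree u = PG.degree v := by simpa using congrArg List.length h
    rw [← hd, List.map_inj_left] at h
    exact ⟨hd, fun p hp => h p (List.mem_range.2 hp)⟩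
  · rintro ⟨hd, h⟩
    rw [← hd, List.map_inj_left]
    exact fun p hp => h p (List.mem_range.1 hp)

theorem augView_eq_of_succ_eq {ℓ : ℕ} {u v : Fin PG.n}
    (h : PG.augView (ℓ + 1) u = PG.augView (ℓ + 1) v) : PG.augView ℓ u = PG.augView ℓ v := by
  induction ℓ generalizing u v with
  | zero => exact congrArg AugView.leaf (augView_succ_eq_iff.1 h).1
  | succ ℓ ih =>
    obtain ⟨hd, hch⟩ := augView_succ_eq_iff.1 h
    refine augView_succ_eq_iff.2 ⟨hd, fun p hp => ?_⟩
    obtain ⟨hq, hv⟩ := Prod.mk.inj (hch p hp)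
    rw [hq, ih hv]

theorem augView_eq_of_le {ℓ ℓ' : ℕ} (hle : ℓ' ≤ ℓ) {u v : Fin PG.n}
    (h : PG.augView ℓ u = PG.augView ℓ v) : PG.augView ℓ' u = PG.augView ℓ' v := by
  induction hle with
  | refl => exact h
  | step _ ih => exact ih (augView_eq_of_succ_eq h)

theorem augView_add_eq_of_forall {ℓ : ℕ}
    (H : ∀ x y, PG.augView ℓ x = PG.augView ℓ y → PG.augView (ℓ + 1) x = PG.augView (ℓ + 1) y)
    (k : ℕ) {x y : Fin PG.n} (h : PG.augView ℓ x = PG.augView ℓ y) :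
    PG.augView (ℓ + k) x = PG.augView (ℓ + k) y := by
  induction k generalizing x y with
  | zero => exact h
  | succ k ih =>
    rw [← Nat.add_assoc]
    obtain ⟨hd, hch⟩ := augView_succ_eq_iff.1 (H x y h)
    refine augView_succ_eq_iff.2 ⟨hd, fun p hp => ?_⟩
    obtain ⟨hq, hv⟩ := Prod.mk.inj (hch p hp)
    rw [hq, ih hv]

theorem exists_augView_eq_augView_succ_ne (hf : PG.Feasible) {m : ℕ}
    (hm : m < PG.electionIndex) :
    ∃ u v, PG.augView m u = PG.augView m v ∧ PG.augView (m + 1) u ≠ PG.augView (m + 1) v := by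
  by_contra! hstable
  refine Nat.notMem_of_lt_sInf hm fun x y hxy => Nat.sInf_mem hf ?_
  have := augView_add_eq_of_forall hstable (PG.electionIndex - m) hxy
  rwa [Nat.add_sub_cancel' hm.le] at this

noncomputable def numViews (PG : PortGraph) (ℓ : ℕ) : ℕ :=
  #(univ.image (PG.augView ℓ))

theorem succ_le_numViews (hf : PG.Feasible) {ℓ : ℕ} (hℓ : ℓ ≤ PG.electionIndex) :
    ℓ + 1 ≤ PG.numViews ℓ := by
  induction ℓ with
  | zero => exact card_pos.2 (univ_nonempty.image _)
  | succ ℓ ih =>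
    obtain ⟨u, v, huv, hne⟩ := exists_augView_eq_augView_succ_ne hf hℓ
    have := card_image_lt_card_image_of_refines (f := PG.augView (ℓ + 1))
      (fun _ _ => augView_eq_of_succ_eq) huv hne
    exact (ih (by omega)).trans_lt this

inductive PortWalk (PG : PortGraph) : Fin PG.n → List (ℕ × ℕ) → Fin PG.n → Prop
  | nil (v : Fin PG.n) : PortWalk PG v [] v
  | cons {v u w : Fin PG.n} {p q : ℕ} {s : List (ℕ × ℕ)}
      (hadj : PG.G.Adj v u) (hp : PG.portNum v u = p) (hq : PG.portNum u v = q)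
      (ht : PortWalk PG u s w) : PortWalk PG v ((p, q) :: s) w

namespace PortWalk

theorem unique {v w w' : Fin PG.n} {s : List (ℕ × ℕ)}
    (h : PG.PortWalk v s w) (h' : PG.PortWalk v s w') : w = w' := by
  induction h with
  | nil => cases h'; rfl
  | cons hadj hp _ _ ih =>
    cases h' with
    | cons hadj' hp' _ ht' =>
      obtain rfl := PG.port_inj _ _ _ hadj hadj' (hp.trans hp'.symm)
      exact ih ht'

theorem append {v w z : Fin PG.n} {s t : List (ℕ × ℕ)}
    (h : PG.PortWalk v s w) (h' : PG.PortWalk w t z) : PG.PortWalk v (s ++ t) z := by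
  induction h with
  | nil => exact h'
  | cons hadj hp hq _ ih => exact cons hadj hp hq (ih h')

theorem reverse {v w : Fin PG.n} {s : List (ℕ × ℕ)} (h : PG.PortWalk v s w) :
    PG.PortWalk w (s.map Prod.swap).reverse v := by
  induction h with
  | nil => exact nil _
  | cons hadj hp hq _ ih =>
    simpa using ih.append (cons hadj.symm hq hp (nil _))

theorem exists_of_walk {u x : Fin PG.n} (w : PG.G.Walk u x) :
    ∃ s, PG.PortWalk u s x ∧ s.length = w.length := by
  induction w with
  | nil => exact ⟨[], nil _, rfl⟩
  | cons hadj _ ih =>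
    obtain ⟨s, hs, hlen⟩ := ih
    exact ⟨_, cons hadj rfl rfl hs, by simp [hlen]⟩

end PortWalk

theorem exists_adj_of_augView_succ_eq {M : ℕ} {x y u : Fin PG.n}
    (hxy : PG.augView (M + 1) x = PG.augView (M + 1) y) (hxu : PG.G.Adj x u) :
    ∃ u', PG.G.Adj y u' ∧ PG.portNum y u' = PG.portNum x u ∧ PG.portNum u' y = PG.portNum u x ∧
      PG.augView M u = PG.augView M u' := by
  obtain ⟨hd, hch⟩ := augView_succ_eq_iff.1 hxy
  have hp := PG.port_lt x u hxu
  obtain ⟨hadj, hport⟩ := nbr_spec (hd ▸ hp : PG.portNum x u < PG.degree y)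
  obtain ⟨hq, hv⟩ := Prod.mk.inj (hch _ hp)
  rw [nbr_portNum hxu] at hq hv
  exact ⟨_, hadj, hport, hq.symm, hv⟩

theorem PortWalk.exists_augView_eq {x x₁ : Fin PG.n} {s : List (ℕ × ℕ)}
    (h : PG.PortWalk x s x₁) {M : ℕ} {y : Fin PG.n} (hM : s.length ≤ M)
    (hxy : PG.augView M x = PG.augView M y) :
    ∃ y₁, PG.PortWalk y s y₁ ∧ PG.augView (M - s.length) x₁ = PG.augView (M - s.length) y₁ := by
  induction h generalizing M y with
  | nil => exact ⟨y, nil y, hxy⟩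
  | cons hadj hp hq _ ih =>
    obtain ⟨M, rfl⟩ : ∃ M', M = M' + 1 := Nat.exists_eq_add_one.2 (by simp at hM; omega)
    obtain ⟨u', hadj', hp', hq', hu⟩ := exists_adj_of_augView_succ_eq hxy hadj
    obtain ⟨y₁, hw, h₁⟩ := ih (by simpa using hM) hu
    exact ⟨y₁, cons hadj' (hp'.trans hp) (hq'.trans hq) hw, by simpa using h₁⟩

variable (PG) in
theorem dist_le_diam (u v : Fin PG.n) : PG.G.dist u v ≤ PG.diam :=
  le_csSup (Set.finite_range _).bddAbove ⟨(u, v), rfl⟩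

variable (PG) in
theorem one_le_diam : 1 ≤ PG.diam := by
  have : Nontrivial (Fin PG.n) := Fin.nontrivial_iff_two_le.2 (by have := PG.three_le; omega)
  obtain ⟨u, v, huv⟩ := exists_pair_ne (Fin PG.n)
  exact (PG.conn.pos_dist_of_ne huv).trans_le (PG.dist_le_diam u v)

variable (PG) in
theorem diam_lt_n : PG.diam < PG.n := by
  obtain ⟨⟨u, v⟩, huv⟩ : PG.diam ∈ Set.range fun p : Fin PG.n × Fin PG.n => PG.G.dist p.1 p.2 :=
    Nat.sSup_mem (Set.range_nonempty _) (Set.finite_range _).bddAbove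
  obtain ⟨w, hw⟩ := PG.conn.exists_walk_length_eq_dist u v
  have := (w.isPath_of_length_eq_dist hw).length_lt
  rw [Fintype.card_fin, hw] at this
  exact huv ▸ this

theorem exists_augView_eq_augView_ne (hf : PG.Feasible) {ℓ : ℕ}
    (hℓ : ℓ + PG.diam < PG.electionIndex) (x : Fin PG.n) :
    ∃ x', PG.augView ℓ x = PG.augView ℓ x' ∧
      PG.augView (ℓ + 2 * PG.diam + 1) x ≠ PG.augView (ℓ + 2 * PG.diam + 1) x' := by
  obtain ⟨u, v, huv, hsplit⟩ := exists_augView_eq_augView_succ_ne hf hℓ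
  obtain ⟨w, hw⟩ := PG.conn.exists_walk_length_eq_dist u x
  obtain ⟨s, hs, hlen⟩ := PortWalk.exists_of_walk w
  have hD : s.length ≤ PG.diam := hlen ▸ hw ▸ PG.dist_le_diam u x
  obtain ⟨x', hs', hxx'⟩ := hs.exists_augView_eq (by omega) huv
  refine ⟨x', augView_eq_of_le (by omega) hxx', fun hx => hsplit ?_⟩
  obtain ⟨v', hv', huv'⟩ := hs.reverse.exists_augView_eq (by simp; omega) hx
  rw [hs'.reverse.unique hv']
  exact augView_eq_of_le (by simp; omega) huv'

theorem two_pow_le_card_augView_eq (hf : PG.Feasible) {j ℓ : ℕ}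
    (h : ℓ + j * (2 * PG.diam + 1) + PG.diam < PG.electionIndex) (x : Fin PG.n) :
    2 ^ j ≤ #{y | PG.augView ℓ y = PG.augView ℓ x} := by
  induction j generalizing ℓ x with
  | zero => exact card_pos.2 ⟨x, by simp⟩
  | succ j ih =>
    rw [pow_succ']
    exact two_mul_le_card_filter_eq_of_refines (fun _ _ => augView_eq_of_le (by omega))
      (exists_augView_eq_augView_ne hf (by nlinarith)) (ih (by nlinarith)) x

theorem succ_mul_two_pow_le_n (hf : PG.Feasible) {j ℓ : ℕ}
    (h : ℓ + j * (2 * PG.diam + 1) + PG.diam < PG.electionIndex) :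
    (ℓ + 1) * 2 ^ j ≤ PG.n :=
  calc (ℓ + 1) * 2 ^ j ≤ 2 ^ j * PG.numViews ℓ :=
        mul_comm (ℓ + 1) _ ▸ Nat.mul_le_mul_left _ (succ_le_numViews hf (by omega))
    _ ≤ #(univ : Finset (Fin PG.n)) := mul_card_image_le_card _ _ fun b hb => by
        obtain ⟨x, -, rfl⟩ := mem_image.1 hb
        exact two_pow_le_card_augView_eq hf h x
    _ = PG.n := by simp

theorem exists_diam_mul_two_pow_le_n (hf : PG.Feasible) :
    ∃ j, PG.diam * 2 ^ j ≤ PG.n ∧ PG.electionIndex ≤ 6 * PG.diam * (j + 1) := by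
  have hD := PG.one_le_diam
  by_cases hφ : PG.electionIndex ≤ 2 * PG.diam
  · exact ⟨0, by simpa using PG.diam_lt_n.le, by omega⟩
  obtain ⟨j, hj⟩ : ∃ j, PG.electionIndex / (2 * PG.diam + 1) = j + 1 :=
    Nat.exists_eq_add_one.2 (Nat.div_pos (by omega) (by omega))
  have hdiv := Nat.div_add_mod PG.electionIndex (2 * PG.diam + 1)
  have hmod := Nat.mod_lt PG.electionIndex (show 0 < 2 * PG.diam + 1 by omega)
  rw [hj] at hdiv
  refine ⟨j, ?_, by nlinarith⟩
  calc PG.diam * 2 ^ j ≤ (PG.diam + 1) * 2 ^ j := by gcongr; omega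
    _ ≤ PG.n := succ_mul_two_pow_le_n hf (by rw [← hdiv]; ring_nf; omega)

theorem electionIndex_le (hf : PG.Feasible) :
    (PG.electionIndex : ℝ) ≤ 6 * PG.diam * (1 + Real.logb 2 ((PG.n : ℝ) / PG.diam)) := by
  obtain ⟨j, hjn, hφ⟩ := exists_diam_mul_two_pow_le_n hf
  have hD : (0 : ℝ) < PG.diam := by exact_mod_cast PG.one_le_diam
  have hn : (0 : ℝ) < PG.n := by exact_mod_cast Nat.pos_of_neZero PG.n
  have hj : (j : ℝ) ≤ Real.logb 2 ((PG.n : ℝ) / PG.diam) := by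
    rw [Real.le_logb_iff_rpow_le one_lt_two (by positivity), Real.rpow_natCast, le_div_iff₀ hD]
    exact_mod_cast mul_comm PG.diam (2 ^ j) ▸ hjn
  calc (PG.electionIndex : ℝ) ≤ 6 * PG.diam * (j + 1) := by exact_mod_cast hφ
    _ ≤ 6 * PG.diam * (1 + Real.logb 2 ((PG.n : ℝ) / PG.diam)) :=
        mul_le_mul_of_nonneg_left (by linarith) (by positivity)

end PortGraph

/-- There is a constant `C > 0` such that every feasible port-numbered graph with `n`
nodes and diameter `D` has election index at most `C · D · (1 + log (n / D))`. -/
theorem electionIndex_upper_bound :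
    ∃ C : ℝ, 0 < C ∧ ∀ PG : PortGraph, PG.Feasible →
      (PG.electionIndex : ℝ) ≤
        C * (PG.diam : ℝ) * (1 + Real.logb 2 ((PG.n : ℝ) / (PG.diam : ℝ))) :=
  ⟨6, by norm_num, fun _ hf => PortGraph.electionIndex_le hf⟩

end Election
end
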